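/- For any finite simple graph G, the matching gap μ(G) = ν(G) − β(G) is at least 1 if and only if G has a maximal matching with an augmenting P4. -/

import Mathlib

open SimpleGraph

variable {V : Type*}

/-- `M` is a matching in `G`: a set of pairwise vertex-disjoint edges of `G`. -/
def IsMatchingIn (G : SimpleGraph V) (M : Finset (Sym2 V)) : Prop :=
  (∀ e ∈ M, e ∈ G.edgeSet) ∧
    ∀ e ∈ M, ∀ f ∈ M, e ≠ f → ∀ v : V, v ∈ e → v ∉ f

/-- `M` is a maximal matching in `G`: a matching not properly contained in another matching. -/
def IsMaximalMatchingIn (G : SimpleGraph V) (M : Finset (Sym2 V)) : Prop :=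
  IsMatchingIn G M ∧ ∀ M', IsMatchingIn G M' → M ⊆ M' → M' = M

/-- `M` saturates (covers) the vertex `v`. -/
def Sat (M : Finset (Sym2 V)) (v : V) : Prop := ∃ e ∈ M, v ∈ e

/-- The matching number `ν(G)`. -/
noncomputable def nuNum (G : SimpleGraph V) : ℕ :=
  sSup {n | ∃ M, IsMatchingIn G M ∧ M.card = n}

/-- The minimum maximal matching number `β(G)`. -/
noncomputable def betaNum (G : SimpleGraph V) : ℕ :=
  sInf {n | ∃ M, IsMaximalMatchingIn G M ∧ M.card = n}

/-- The matching gap `μ(G) = ν(G) - β(G)`. -/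
noncomputable def muGap (G : SimpleGraph V) : ℕ := nuNum G - betaNum G

/-- `M` has an augmenting `P₄`: a path `u w y v` on four distinct vertices with
`wy ∈ M` and `u`, `v` not saturated by `M`. -/
def HasAugP4 (G : SimpleGraph V) (M : Finset (Sym2 V)) : Prop :=
  ∃ u w y v : V, u ≠ w ∧ u ≠ y ∧ u ≠ v ∧ w ≠ y ∧ w ≠ v ∧ y ≠ v ∧
    G.Adj u w ∧ G.Adj w y ∧ G.Adj y v ∧ s(w, y) ∈ M ∧ ¬ Sat M u ∧ ¬ Sat M v

/-!
Augmenting along a `P₄` `u w y v` (replace `wy` by `uw` and `yv`) gives a matching one larger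
than `M`, so `β < ν` whenever some maximal matching has an augmenting `P₄`.

Conversely, let `M` be a maximal matching and `N` a matching with `|M| < |N|`. Some vertex `u`
is covered by an edge `uw ∈ N` but not by `M`; by maximality `w` is matched by some `wy ∈ M`.
If `y` has an unsaturated neighbour other than `u`, this is an augmenting `P₄`. Otherwise the
swap `M - wy + uw` is again a maximal matching of the same size, sharing one more edge with `N`,
and we conclude by induction on `|M \ N|`.
-/

open Finset

section Matching

variable {G : SimpleGraph V} {M N : Finset (Sym2 V)} {a b u w y x : V}

theorem Sat.mono {M' : Finset (Sym2 V)} (h : M ⊆ M') (hx : Sat M x) : Sat M' x :=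
  let ⟨e, he, hxe⟩ := hx
  ⟨e, h he, hxe⟩

theorem notMem_of_not_sat {e : Sym2 V} (hx : ¬ Sat M x) (hxe : x ∈ e) : e ∉ M :=
  fun he => hx ⟨e, he, hxe⟩

theorem sat_insert_iff [DecidableEq V] {e : Sym2 V} :
    Sat (insert e M) x ↔ x ∈ e ∨ Sat M x := by
  simp [Sat]

theorem isMatchingIn_empty : IsMatchingIn G ∅ :=
  ⟨by simp, by simp⟩

theorem IsMatchingIn.mono {M' : Finset (Sym2 V)} (hM : IsMatchingIn G M) (h : M' ⊆ M) :
    IsMatchingIn G M' :=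
  ⟨fun e he => hM.1 e (h he), fun e he f hf => hM.2 e (h he) f (h hf)⟩

theorem IsMatchingIn.not_sat_erase [DecidableEq V] {f : Sym2 V} (hM : IsMatchingIn G M)
    (hf : f ∈ M) (hx : x ∈ f) : ¬ Sat (M.erase f) x := by
  rintro ⟨e, he, hxe⟩
  exact hM.2 e (mem_of_mem_erase he) f hf (ne_of_mem_erase he) x hxe hx

theorem IsMatchingIn.insert [DecidableEq V] (hM : IsMatchingIn G M) (hab : G.Adj a b)
    (ha : ¬ Sat M a) (hb : ¬ Sat M b) : IsMatchingIn G (insert s(a, b) M) := by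
  have hfree : ∀ g ∈ M, ∀ x ∈ s(a, b), x ∉ g := by
    rintro g hg x hx hxg
    rcases Sym2.mem_iff.mp hx with rfl | rfl
    exacts [ha ⟨g, hg, hxg⟩, hb ⟨g, hg, hxg⟩]
  refine ⟨fun e he => ?_, fun e he f hf hef x hxe hxf => ?_⟩
  · rcases mem_insert.mp he with rfl | he
    exacts [hab, hM.1 e he]
  rcases mem_insert.mp he with rfl | he <;> rcases mem_insert.mp hf with rfl | hf
  · exact hef rfl
  · exact hfree f hf x hxe hxf
  · exact hfree e he x hxf hxe
  · exact hM.2 e he f hf hef x hxe hxf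

theorem IsMatchingIn.card_biUnion_toFinset [DecidableEq V] (hM : IsMatchingIn G M) :
    (M.biUnion Sym2.toFinset).card = 2 * M.card := by
  rw [card_biUnion, sum_congr rfl fun e he =>
    Sym2.card_toFinset_of_not_isDiag e (G.not_isDiag_of_mem_edgeSet (hM.1 e he)), sum_const,
    smul_eq_mul, mul_comm]
  intro e he f hf hef
  rw [Function.onFun, Finset.disjoint_left]
  exact fun x hxe hxf => hM.2 e he f hf hef x (Sym2.mem_toFinset.mp hxe) (Sym2.mem_toFinset.mp hxf)

theorem IsMatchingIn.exists_sat_not_sat_of_card_lt (hM : IsMatchingIn G M)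
    (hN : IsMatchingIn G N) (h : M.card < N.card) : ∃ u, Sat N u ∧ ¬ Sat M u := by
  classical
  by_contra! hcover
  have hsub : N.biUnion Sym2.toFinset ⊆ M.biUnion Sym2.toFinset := by
    intro x hx
    simp only [mem_biUnion, Sym2.mem_toFinset] at hx ⊢
    exact hcover x hx
  have := card_le_card hsub
  rw [hM.card_biUnion_toFinset, hN.card_biUnion_toFinset] at this
  omega

theorem HasAugP4.exists_card_eq_add_one (hM : IsMatchingIn G M) (hP : HasAugP4 G M) :
    ∃ N, IsMatchingIn G N ∧ N.card = M.card + 1 := by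
  classical
  obtain ⟨u, w, y, v, -, huy, huv, hwy, hwv, -, huw, -, hyv, hwyM, hu, hv⟩ := hP
  set M₀ := M.erase s(w, y)
  have hM₀ : IsMatchingIn G M₀ := hM.mono (erase_subset _ _)
  have hu₀ : ¬ Sat M₀ u := fun h => hu (h.mono (erase_subset _ _))
  have hv₀ : ¬ Sat M₀ v := fun h => hv (h.mono (erase_subset _ _))
  have hw₀ : ¬ Sat M₀ w := hM.not_sat_erase hwyM (Sym2.mem_mk_left w y)
  have hy₀ : ¬ Sat M₀ y := hM.not_sat_erase hwyM (Sym2.mem_mk_right w y)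
  have hu₁ : ¬ Sat (insert s(y, v) M₀) u := by
    simpa only [sat_insert_iff, Sym2.mem_iff, not_or] using ⟨⟨huy, huv⟩, hu₀⟩
  have hw₁ : ¬ Sat (insert s(y, v) M₀) w := by
    simpa only [sat_insert_iff, Sym2.mem_iff, not_or] using ⟨⟨hwy, hwv⟩, hw₀⟩
  refine ⟨insert s(u, w) (insert s(y, v) M₀),
    (hM₀.insert hyv hy₀ hv₀).insert huw hu₁ hw₁, ?_⟩
  rw [card_insert_of_notMem (notMem_of_not_sat hu₁ (Sym2.mem_mk_left u w)),
    card_insert_of_notMem (notMem_of_not_sat hy₀ (Sym2.mem_mk_left y v)),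
    card_erase_add_one hwyM]

theorem IsMatchingIn.not_sat_of_subset {M' : Finset (Sym2 V)} {g : Sym2 V}
    (hM' : IsMatchingIn G M') (h : M ⊆ M') (hg : g ∈ M') (hgM : g ∉ M) (hx : x ∈ g) :
    ¬ Sat M x := by
  rintro ⟨e, he, hxe⟩
  exact hM'.2 e (h he) g hg (ne_of_mem_of_not_mem he hgM) x hxe hx

theorem isMaximalMatchingIn_iff :
    IsMaximalMatchingIn G M ↔
      IsMatchingIn G M ∧ ∀ ⦃a b⦄, G.Adj a b → Sat M a ∨ Sat M b := by
  classical
  refine ⟨fun hM => ⟨hM.1, fun a b hab => ?_⟩,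
    fun ⟨hM, hcover⟩ => ⟨hM, fun M' hM' h => ?_⟩⟩
  · by_contra! hfree
    have hins := hM.2 _ (hM.1.insert hab hfree.1 hfree.2) (subset_insert _ _)
    exact notMem_of_not_sat hfree.1 (Sym2.mem_mk_left a b) (hins ▸ mem_insert_self _ _)
  refine subset_antisymm (fun g hg => ?_) h
  by_contra hgM
  induction g using Sym2.ind with
  | _ a b =>
    rcases hcover (hM'.1 _ hg) with ha | hb
    exacts [hM'.not_sat_of_subset h hg hgM (Sym2.mem_mk_left a b) ha,
      hM'.not_sat_of_subset h hg hgM (Sym2.mem_mk_right a b) hb]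

theorem IsMaximalMatchingIn.sat_of_adj (hM : IsMaximalMatchingIn G M) (hab : G.Adj a b)
    (ha : ¬ Sat M a) : Sat M b :=
  ((isMaximalMatchingIn_iff.mp hM).2 hab).resolve_left ha

theorem IsMaximalMatchingIn.swap [DecidableEq V] (hM : IsMaximalMatchingIn G M)
    (huw : G.Adj u w) (hu : ¬ Sat M u) (hwyM : s(w, y) ∈ M)
    (hy : ∀ v, G.Adj y v → ¬ Sat M v → v = u) :
    IsMaximalMatchingIn G (insert s(u, w) (M.erase s(w, y))) := by
  set M' := insert s(u, w) (M.erase s(w, y))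
  have hu' : Sat M' u := ⟨_, mem_insert_self _ _, Sym2.mem_mk_left u w⟩
  have hsat : ∀ x, Sat M x → x ≠ y → Sat M' x := by
    rintro x ⟨e, he, hxe⟩ hxy
    by_cases hew : e = s(w, y)
    · subst hew
      obtain rfl : x = w := (Sym2.mem_iff.mp hxe).resolve_right hxy
      exact ⟨_, mem_insert_self _ _, Sym2.mem_mk_right u x⟩
    · exact ⟨e, mem_insert_of_mem (mem_erase.mpr ⟨hew, he⟩), hxe⟩
  have hcover : ∀ ⦃a b⦄, G.Adj a b → Sat M a → Sat M' a ∨ Sat M' b := by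
    intro a b hab ha
    by_cases hay : a = y
    · subst hay
      right
      by_cases hb : Sat M b
      · exact hsat b hb hab.ne.symm
      · exact hy b hab hb ▸ hu'
    · exact Or.inl (hsat a ha hay)
  refine isMaximalMatchingIn_iff.mpr ⟨?_, fun a b hab => ?_⟩
  · exact (hM.1.mono (erase_subset _ _)).insert huw (fun h => hu (h.mono (erase_subset _ _)))
      (hM.1.not_sat_erase hwyM (Sym2.mem_mk_left w y))
  rcases (isMaximalMatchingIn_iff.mp hM).2 hab with ha | hb
  exacts [hcover hab ha, (hcover hab.symm hb).symm]

theorem IsMaximalMatchingIn.exists_swap [DecidableEq V] (hM : IsMaximalMatchingIn G M)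
    (hN : IsMatchingIn G N) (hlt : M.card < N.card) (hP : ¬ HasAugP4 G M) :
    ∃ M', IsMaximalMatchingIn G M' ∧ M'.card = M.card ∧ (M' \ N).card < (M \ N).card := by
  obtain ⟨u, ⟨e, heN, hue⟩, hu⟩ := hM.1.exists_sat_not_sat_of_card_lt hN hlt
  obtain ⟨w, rfl⟩ := Sym2.mem_iff_exists.mp hue
  have huw : G.Adj u w := hN.1 _ heN
  obtain ⟨f, hfM, hwf⟩ := hM.sat_of_adj huw hu
  obtain ⟨y, rfl⟩ := Sym2.mem_iff_exists.mp hwf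
  have hwy : G.Adj w y := hM.1.1 _ hfM
  have huy : u ≠ y := fun h => hu ⟨_, hfM, h ▸ Sym2.mem_mk_right w y⟩
  have hy : ∀ v, G.Adj y v → ¬ Sat M v → v = u := by
    intro v hyv hv
    by_contra hvu
    have hwv : w ≠ v := fun h => hv (h ▸ ⟨_, hfM, Sym2.mem_mk_left w y⟩)
    exact hP ⟨u, w, y, v, huw.ne, huy, Ne.symm hvu, hwy.ne, hwv, hyv.ne, huw, hwy, hyv, hfM, hu,
      hv⟩
  have huwM : s(u, w) ∉ M := notMem_of_not_sat hu (Sym2.mem_mk_left u w)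
  have hwyN : s(w, y) ∉ N := fun h =>
    hN.2 _ heN _ h (ne_of_mem_of_not_mem hfM huwM).symm w (Sym2.mem_mk_right u w)
      (Sym2.mem_mk_left w y)
  refine ⟨_, hM.swap huw hu hfM hy, ?_, ?_⟩
  · rw [card_insert_of_notMem fun h => huwM (mem_of_mem_erase h), card_erase_add_one hfM]
  · refine lt_of_le_of_lt (card_le_card fun g hg => ?_)
      (card_erase_lt_of_mem (mem_sdiff.mpr ⟨hfM, hwyN⟩))
    obtain ⟨hg, hgN⟩ := mem_sdiff.mp hg
    rcases mem_insert.mp hg with rfl | hg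
    · exact absurd heN hgN
    · exact mem_erase.mpr ⟨ne_of_mem_erase hg, mem_sdiff.mpr ⟨mem_of_mem_erase hg, hgN⟩⟩

theorem IsMaximalMatchingIn.exists_hasAugP4_of_card_lt (hM : IsMaximalMatchingIn G M)
    (hN : IsMatchingIn G N) (hlt : M.card < N.card) :
    ∃ M', IsMaximalMatchingIn G M' ∧ HasAugP4 G M' := by
  classical
  induction hk : (M \ N).card using Nat.strong_induction_on generalizing M with
  | _ k ih =>
    by_cases hP : HasAugP4 G M
    · exact ⟨M, hM, hP⟩
    obtain ⟨M', hM', hcard, hdec⟩ := hM.exists_swap hN hlt hP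
    exact ih _ (hk ▸ hdec) hM' (hcard ▸ hlt) rfl

theorem IsMaximalMatchingIn.betaNum_le (hM : IsMaximalMatchingIn G M) : betaNum G ≤ M.card :=
  Nat.sInf_le ⟨M, hM, rfl⟩

variable [Finite V]

theorem bddAbove_matching_card : BddAbove {n | ∃ M, IsMatchingIn G M ∧ M.card = n} := by
  have := Fintype.ofFinite V
  refine ⟨Fintype.card (Sym2 V), ?_⟩
  rintro n ⟨M, -, rfl⟩
  exact card_le_univ M

theorem IsMatchingIn.card_le_nuNum (hM : IsMatchingIn G M) : M.card ≤ nuNum G :=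
  le_csSup bddAbove_matching_card ⟨M, hM, rfl⟩

theorem exists_isMatchingIn_card_eq_nuNum (G : SimpleGraph V) :
    ∃ N, IsMatchingIn G N ∧ N.card = nuNum G :=
  Nat.sSup_mem (s := {n | ∃ M, IsMatchingIn G M ∧ M.card = n})
    ⟨0, ∅, isMatchingIn_empty, card_empty⟩ bddAbove_matching_card

theorem exists_isMaximalMatchingIn_card_eq_betaNum (G : SimpleGraph V) :
    ∃ M, IsMaximalMatchingIn G M ∧ M.card = betaNum G := by
  obtain ⟨N, hN, hNcard⟩ := exists_isMatchingIn_card_eq_nuNum G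
  have hNmax : IsMaximalMatchingIn G N := ⟨hN, fun M' hM' h =>
    (eq_of_subset_of_card_le h (hNcard ▸ hM'.card_le_nuNum)).symm⟩
  exact Nat.sInf_mem (s := {n | ∃ M, IsMaximalMatchingIn G M ∧ M.card = n})
    ⟨N.card, N, hNmax, rfl⟩

end Matching

theorem stmt_3 {V : Type*} [Fintype V] (G : SimpleGraph V) :
    1 ≤ muGap G ↔ ∃ M : Finset (Sym2 V), IsMaximalMatchingIn G M ∧ HasAugP4 G M := by
  unfold muGap
  constructor
  · intro h
    obtain ⟨M, hM, hMcard⟩ := exists_isMaximalMatchingIn_card_eq_betaNum G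
    obtain ⟨N, hN, hNcard⟩ := exists_isMatchingIn_card_eq_nuNum G
    exact hM.exists_hasAugP4_of_card_lt hN (by omega)
  · rintro ⟨M, hM, hP⟩
    obtain ⟨N, hN, hNcard⟩ := hP.exists_card_eq_add_one hM.1
    have := hN.card_le_nuNum
    have := hM.betaNum_le
    omega
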